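/- For all integers k ≥ 2 and ℓ ≥ 0, the number of inversions of the digit-reversal permutation R_k(ℓ) equals (k^{2ℓ} − ℓ·k^{ℓ+1} + (ℓ−1)·k^ℓ)/4. -/

import Mathlib

/-!
Write `n = k * a + r` with `r < k` its last digit. Then
`digitRev k (ℓ + 1) n = r * k ^ ℓ + digitRev k ℓ a`, so `n < m` compares (high part, last digit)
lexicographically while the reversals compare (last digit, reversed high part) lexicographically.
Hence `(k a + r, k b + s)` is an inversion iff `a < b` and either `s < r`, or `r = s` and `(a, b)`
is an inversion at level `ℓ`. So the inversion count `I ℓ` satisfies `I 0 = 0` and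
`I (ℓ + 1) = C(k ^ ℓ, 2) * C(k, 2) + k * I ℓ`, a recursion solved by the closed form.
-/

/-- `digitRev k ℓ n` : the radix-`k` digit reversal of `n`, viewed as a string of exactly
`ℓ` base-`k` digits (padded with leading zeros). -/
def digitRev (k : ℕ) : ℕ → ℕ → ℕ
  | 0, _ => 0
  | ℓ + 1, n => n % k * k ^ ℓ + digitRev k ℓ (n / k)

open Finset

def inversionCount (f : ℕ → ℕ) (N : ℕ) : ℕ :=
  #{q : Fin N × Fin N | q.1 < q.2 ∧ f q.2 < f q.1}

theorem Nat.mul_add_lt_mul_add_iff {k a b r s : ℕ} (hr : r < k) (hs : s < k) :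
    a * k + r < b * k + s ↔ a < b ∨ a = b ∧ r < s := by
  rcases lt_trichotomy a b with h | rfl | h
  · have := Nat.mul_le_mul_right k h
    simp only [h, true_or, iff_true]
    nlinarith
  · simp
  · have := Nat.mul_le_mul_right k h
    simp only [h.not_gt, h.ne', false_and, or_self, iff_false, not_lt]
    nlinarith

theorem digitRev_lt_pow {k : ℕ} : ∀ {ℓ n : ℕ}, n < k ^ ℓ → digitRev k ℓ n < k ^ ℓ
  | 0, _, _ => Nat.one_pos
  | ℓ + 1, n, hn => by
    have hk : 0 < k := Nat.pos_of_ne_zero (by rintro rfl; simp at hn)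
    rw [pow_succ] at hn ⊢
    have hdiv : digitRev k ℓ (n / k) < k ^ ℓ :=
      digitRev_lt_pow (Nat.div_lt_of_lt_mul (by rwa [mul_comm]))
    have hmod : n % k < k := Nat.mod_lt n hk
    show n % k * k ^ ℓ + digitRev k ℓ (n / k) < k ^ ℓ * k
    nlinarith

theorem mod_mul_add_div_inversion_iff {f : ℕ → ℕ} {K k a b r s : ℕ} (ha : f a < K)
    (hb : f b < K) (hr : r < k) (hs : s < k) :
    (r + k * a < s + k * b ∧
        (s + k * b) % k * K + f ((s + k * b) / k) < (r + k * a) % k * K + f ((r + k * a) / k)) ↔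
      a < b ∧ s < r ∨ a < b ∧ r = s ∧ f b < f a := by
  have hk : 0 < k := by omega
  simp only [Nat.add_mul_mod_self_left, Nat.add_mul_div_left _ _ hk, Nat.mod_eq_of_lt hr,
    Nat.mod_eq_of_lt hs, Nat.div_eq_of_lt hr, Nat.div_eq_of_lt hs, zero_add]
  rw [add_comm r, add_comm s, mul_comm k, mul_comm k, Nat.mul_add_lt_mul_add_iff hr hs,
    Nat.mul_add_lt_mul_add_iff hb ha]
  rcases eq_or_ne a b with rfl | hab
  · simpa using Nat.le_of_lt
  · omega

theorem inversionCount_mod_mul_add_div (f : ℕ → ℕ) {N K k : ℕ} (hf : ∀ a < N, f a < K) :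
    inversionCount (fun n => n % k * K + f (n / k)) (N * k) =
      N.choose 2 * k.choose 2 + k * inversionCount f N := by
  have hsplit : inversionCount (fun n => n % k * K + f (n / k)) (N * k) =
      #{p : (Fin N × Fin k) × (Fin N × Fin k) | p.1.1 < p.2.1 ∧ p.2.2 < p.1.2 ∨
        p.1.1 < p.2.1 ∧ p.1.2 = p.2.2 ∧ f p.2.1 < f p.1.1} := by
    refine (card_equiv (finProdFinEquiv.prodCongr finProdFinEquiv) fun p => ?_).symm
    obtain ⟨⟨a, r⟩, ⟨b, s⟩⟩ := p
    simp only [mem_filter, mem_univ, true_and, Equiv.prodCongr_apply, Prod.map, Fin.lt_def,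
      finProdFinEquiv_apply_val, Fin.ext_iff]
    exact (mod_mul_add_div_inversion_iff (hf a a.2) (hf b b.2) r.2 s.2).symm
  rw [hsplit, filter_or, card_union_of_disjoint (disjoint_filter.2 fun p _ h1 h2 => by omega)]
  congr 1
  · calc _ = #(({q : Fin N × Fin N | q.1 < q.2} : Finset _) ×ˢ
            ({q : Fin k × Fin k | q.1 < q.2} : Finset _)) :=
          card_equiv ((Equiv.prodProdProdComm _ _ _ _).trans
            ((Equiv.refl _).prodCongr (Equiv.prodComm _ _))) fun p => by simp
      _ = _ := by
        rw [card_product, Fintype.card_product_filter_lt, Fintype.card_product_filter_lt,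
          Fintype.card_fin, Fintype.card_fin]
  · calc _ = #((univ : Finset (Fin k)) ×ˢ
            ({q : Fin N × Fin N | q.1 < q.2 ∧ f q.2 < f q.1} : Finset _)) := by
          refine card_nbij' (fun p => (p.1.2, (p.1.1, p.2.1)))
            (fun q => ((q.2.1, q.1), (q.2.2, q.1))) ?_ ?_ ?_ ?_ <;>
            intro p <;> simp +contextual [Prod.ext_iff, eq_comm]
      _ = _ := by rw [card_product, card_univ, Fintype.card_fin]; rfl

theorem inversionCount_one (f : ℕ → ℕ) : inversionCount f 1 = 0 := by
  simp [inversionCount]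

theorem four_mul_inversionCount_digitRev (k ℓ : ℕ) :
    4 * (inversionCount (digitRev k ℓ) (k ^ ℓ) : ℤ) =
      (k : ℤ) ^ (2 * ℓ) - ℓ * (k : ℤ) ^ (ℓ + 1) + ((ℓ : ℤ) - 1) * (k : ℤ) ^ ℓ := by
  induction ℓ with
  | zero => simp [inversionCount_one]
  | succ ℓ ih =>
    have hrec : inversionCount (digitRev k (ℓ + 1)) (k ^ (ℓ + 1)) =
        (k ^ ℓ).choose 2 * k.choose 2 + k * inversionCount (digitRev k ℓ) (k ^ ℓ) := by
      rw [pow_succ]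
      exact inversionCount_mod_mul_add_div _ fun a ha => digitRev_lt_pow ha
    qify at ih ⊢
    rw [hrec]
    push_cast [Nat.cast_choose_two]
    linear_combination (k : ℚ) * ih

theorem stmt7 (k ℓ : ℕ) :
    ((Finset.univ.filter (fun q : Fin (k ^ ℓ) × Fin (k ^ ℓ) =>
        q.1 < q.2 ∧ digitRev k ℓ (q.2 : ℕ) < digitRev k ℓ (q.1 : ℕ))).card : ℤ) =
      ((k : ℤ) ^ (2 * ℓ) - (ℓ : ℤ) * (k : ℤ) ^ (ℓ + 1) + ((ℓ : ℤ) - 1) * (k : ℤ) ^ ℓ) / 4 := by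
  rw [← four_mul_inversionCount_digitRev, Int.mul_ediv_cancel_left _ four_ne_zero]
  rfl
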